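/- A finite tree admits at most one edge that is inverted by some automorphism: if φ and φ' are automorphisms of a finite tree T inverting edges {v₀, v₁} and {v₀', v₁'} respectively, then {v₀, v₁} = {v₀', v₁'}. -/

import Mathlib

/-!
An edge `uv` of a tree splits the vertices into those closer to `u` and those closer to `v`, and an
automorphism inverting `uv` swaps the two sides, so each side has exactly half of the vertices.
If `u'v'` is another edge, it lies on one side of `uv`, say on the side of `v`; then the side of
`u'v'` containing `u` contains the whole `u`-side of `uv` and also `v`, so it has more than half
of the vertices, and `u'v'` cannot be inverted.
-/

namespace SimpleGraph

variable {V V' : Type*} {G : SimpleGraph V} {G' : SimpleGraph V'}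

lemma Hom.edist_map_le (f : G →g G') (u v : V) : G'.edist (f u) (f v) ≤ G.edist u v := by
  by_cases hr : G.Reachable u v
  · obtain ⟨p, hp⟩ := hr.exists_walk_length_eq_edist
    rw [← hp, ← Walk.length_map f]
    exact edist_le _
  · exact edist_eq_top_of_not_reachable hr ▸ le_top

lemma Iso.edist_map (φ : G ≃g G') (u v : V) : G'.edist (φ u) (φ v) = G.edist u v :=
  le_antisymm (φ.toHom.edist_map_le u v) (by simpa using φ.symm.toHom.edist_map_le (φ u) (φ v))

lemma Iso.dist_map (φ : G ≃g G') (u v : V) : G'.dist (φ u) (φ v) = G.dist u v := by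
  simp only [dist, φ.edist_map]

lemma Walk.dist_add_dist_le_length {x y z : V} (p : G.Walk x y) (hz : z ∈ p.support) :
    G.dist x z + G.dist z y ≤ p.length := by
  classical
  calc G.dist x z + G.dist z y ≤ (p.takeUntil z hz).length + (p.dropUntil z hz).length :=
        add_le_add (dist_le _) (dist_le _)
    _ = p.length := by rw [← Walk.length_append, p.take_spec hz]

/-- The vertices strictly closer to `u` than to `v`; for an edge `uv` of a tree, the vertex set of
the component of `u` once the edge is removed. -/
def closerTo (G : SimpleGraph V) (u v : V) : Set V := {x | G.dist x u < G.dist x v}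

lemma Iso.preimage_closerTo (φ : G ≃g G') (u v : V) :
    φ ⁻¹' G'.closerTo (φ u) (φ v) = G.closerTo u v := by
  ext x
  simp only [closerTo, Set.mem_preimage, Set.mem_ofPred_eq, φ.dist_map]

lemma ncard_closerTo_swap [Finite V] (φ : G ≃g G) {u v : V} (hu : φ u = v) (hv : φ v = u) :
    (G.closerTo v u).ncard = (G.closerTo u v).ncard := by
  rw [← φ.preimage_closerTo u v, hu, hv]
  exact (Set.ncard_preimage_of_injective_subset_range φ.injective
    (by simp [φ.surjective.range_eq])).symm

lemma notMem_closerTo_of_mem {u v x : V} (hx : x ∈ G.closerTo v u) : x ∉ G.closerTo u v :=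
  lt_asymm (show G.dist x v < G.dist x u from hx)

namespace IsTree

variable {u v : V}

lemma dist_eq_add_one_of_mem_closerTo (hT : G.IsTree) (huv : G.Adj u v) {x : V}
    (hx : x ∈ G.closerTo u v) : G.dist x v = G.dist x u + 1 := by
  have := hT.dist_eq_dist_add_one_of_adj x huv
  simp only [closerTo, Set.mem_ofPred_eq] at hx
  omega

lemma compl_closerTo (hT : G.IsTree) (huv : G.Adj u v) : (G.closerTo u v)ᶜ = G.closerTo v u := by
  ext x
  have := hT.dist_ne_of_adj x huv
  simp only [closerTo, Set.mem_compl_iff, Set.mem_ofPred_eq]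
  omega

lemma mem_closerTo_of_notMem (hT : G.IsTree) (huv : G.Adj u v) {x : V}
    (hx : x ∉ G.closerTo u v) : x ∈ G.closerTo v u :=
  hT.compl_closerTo huv ▸ hx

lemma two_mul_ncard_closerTo (hT : G.IsTree) [Finite V] (huv : G.Adj u v) (φ : G ≃g G)
    (hu : φ u = v) (hv : φ v = u) : 2 * (G.closerTo u v).ncard = Nat.card V := by
  rw [← Set.ncard_add_ncard_compl (G.closerTo u v), hT.compl_closerTo huv,
    ncard_closerTo_swap φ hu hv, two_mul]

lemma eq_of_adj_of_mem_closerTo (hT : G.IsTree) (huv : G.Adj u v) {a b : V} (hab : G.Adj a b)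
    (ha : a ∈ G.closerTo u v) (hb : b ∈ G.closerTo v u) : a = u := by
  have hav := hT.dist_eq_add_one_of_mem_closerTo huv ha
  have hbu := hT.dist_eq_add_one_of_mem_closerTo huv.symm hb
  have hba : G.dist b a = 1 := dist_eq_one_iff_adj.2 hab.symm
  have hab' : G.dist a b = 1 := dist_eq_one_iff_adj.2 hab
  have hk : G.dist a u = G.dist b v := by
    have := hT.connected.dist_triangle (u := b) (v := a) (w := u)
    have := hT.connected.dist_triangle (u := a) (v := b) (w := v)
    omega
  -- The walks from `b` to `u` through `a` and through `v` are both shortest, hence the same path.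
  obtain ⟨p, hp⟩ := hT.connected.exists_walk_length_eq_dist a u
  obtain ⟨q, hq⟩ := hT.connected.exists_walk_length_eq_dist b v
  have hthrough_a : (Walk.cons hab.symm p).length = G.dist b u := by
    rw [Walk.length_cons]; omega
  have hthrough_v : (q.concat huv.symm).length = G.dist b u := by
    rw [Walk.length_concat]; omega
  have heq : Walk.cons hab.symm p = q.concat huv.symm :=
    (hT.existsUnique_path b u).unique (Walk.isPath_of_length_eq_dist _ hthrough_a)
      (Walk.isPath_of_length_eq_dist _ hthrough_v)
  have ha_mem : a ∈ (q.concat huv.symm).support := by simp [← heq]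
  rw [Walk.support_concat, List.mem_append, List.mem_singleton] at ha_mem
  rcases ha_mem with ha_mem | rfl
  · have := q.dist_add_dist_le_length ha_mem
    omega
  · rfl

lemma dist_eq_add_of_mem_closerTo (hT : G.IsTree) (huv : G.Adj u v) {x y : V}
    (hx : x ∈ G.closerTo u v) (hy : y ∈ G.closerTo v u) :
    G.dist x y = G.dist x u + G.dist u y := by
  obtain ⟨p, hp⟩ := hT.connected.exists_walk_length_eq_dist x y
  obtain ⟨d, hd, hd_fst, hd_snd⟩ := p.exists_boundary_dart _ hx (notMem_closerTo_of_mem hy)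
  have hu : u ∈ p.support :=
    hT.eq_of_adj_of_mem_closerTo huv d.adj hd_fst (hT.mem_closerTo_of_notMem huv hd_snd) ▸
      p.dart_fst_mem_support_of_mem_darts hd
  have := p.dist_add_dist_le_length hu
  have := hT.connected.dist_triangle (u := x) (v := u) (w := y)
  omega

lemma mem_closerTo_iff_of_adj_of_ne (hT : G.IsTree) (huv : G.Adj u v) {a b : V}
    (hab : G.Adj a b) (hne : s(u, v) ≠ s(a, b)) :
    a ∈ G.closerTo u v ↔ b ∈ G.closerTo u v := by
  have crossing {x y : V} (hxy : G.Adj x y) (hx : x ∈ G.closerTo u v)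
      (hy : y ∉ G.closerTo u v) : s(u, v) = s(x, y) := by
    have hy := hT.mem_closerTo_of_notMem huv hy
    rw [hT.eq_of_adj_of_mem_closerTo huv hxy hx hy,
      hT.eq_of_adj_of_mem_closerTo huv.symm hxy.symm hy hx]
  constructor
  · exact fun ha => by_contra fun hb => hne (crossing hab ha hb)
  · exact fun hb => by_contra fun ha => hne ((crossing hab.symm hb ha).trans Sym2.eq_swap)

lemma closerTo_ssubset (hT : G.IsTree) (huv : G.Adj u v) {u' v' : V} (huv' : G.Adj u' v')
    (hne : s(u, v) ≠ s(u', v')) (hu : u ∈ G.closerTo u' v') (hu' : u' ∈ G.closerTo v u) :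
    G.closerTo u v ⊂ G.closerTo u' v' := by
  have hv' : v' ∈ G.closerTo v u :=
    (hT.mem_closerTo_iff_of_adj_of_ne huv.symm huv' (by rwa [Sym2.eq_swap])).1 hu'
  simp only [closerTo, Set.mem_ofPred_eq] at hu
  refine ⟨fun x hx => ?_, fun hsub => ?_⟩
  · have hxu' := hT.dist_eq_add_of_mem_closerTo huv hx hu'
    have hxv' := hT.dist_eq_add_of_mem_closerTo huv hx hv'
    simp only [closerTo, Set.mem_ofPred_eq, hxu', hxv']
    omega
  · have hu'v := hT.dist_eq_add_one_of_mem_closerTo huv.symm hu'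
    have hv'v := hT.dist_eq_add_one_of_mem_closerTo huv.symm hv'
    have hv : v ∈ G.closerTo u' v' := by
      simp only [closerTo, Set.mem_ofPred_eq, dist_comm (u := v), dist_comm (u := u)] at hu ⊢
      omega
    have := hsub hv
    simp [closerTo] at this

lemma not_closerTo_ssubset_of_inverts (hT : G.IsTree) [Finite V] (huv : G.Adj u v)
    (φ : G ≃g G) (hφu : φ u = v) (hφv : φ v = u) {u' v' : V} (huv' : G.Adj u' v')
    (φ' : G ≃g G) (hφu' : φ' u' = v') (hφv' : φ' v' = u') :
    ¬ G.closerTo u v ⊂ G.closerTo u' v' := by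
  intro hss
  have := Set.ncard_lt_ncard hss
  have := hT.two_mul_ncard_closerTo huv φ hφu hφv
  have := hT.two_mul_ncard_closerTo huv' φ' hφu' hφv'
  omega

lemma eq_of_inverts_of_mem_closerTo (hT : G.IsTree) [Finite V] (huv : G.Adj u v)
    (φ : G ≃g G) (hφu : φ u = v) (hφv : φ v = u) {u' v' : V} (huv' : G.Adj u' v')
    (φ' : G ≃g G) (hφu' : φ' u' = v') (hφv' : φ' v' = u')
    (hu' : u' ∈ G.closerTo v u) : s(u, v) = s(u', v') := by
  by_contra hne
  by_cases hu : u ∈ G.closerTo u' v'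
  · exact hT.not_closerTo_ssubset_of_inverts huv φ hφu hφv huv' φ' hφu' hφv'
      (hT.closerTo_ssubset huv huv' hne hu hu')
  · replace hu := hT.mem_closerTo_of_notMem huv' hu
    have hv' : v' ∈ G.closerTo v u :=
      (hT.mem_closerTo_iff_of_adj_of_ne huv.symm huv' (by rwa [Sym2.eq_swap])).1 hu'
    rw [Sym2.eq_swap (a := u')] at hne
    exact hT.not_closerTo_ssubset_of_inverts huv φ hφu hφv huv'.symm φ' hφv' hφu'
      (hT.closerTo_ssubset huv huv'.symm hne hu hv')

end IsTree

end SimpleGraph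

open SimpleGraph

/-- A finite tree admits at most one edge inverted by some automorphism. -/
theorem tree_inverted_edge_unique
    {V : Type*} [Fintype V] (G : SimpleGraph V) (hT : G.IsTree)
    (φ φ' : G ≃g G) (v₀ v₁ v₀' v₁' : V)
    (h : G.Adj v₀ v₁) (hφ₀ : φ v₀ = v₁) (hφ₁ : φ v₁ = v₀)
    (h' : G.Adj v₀' v₁') (hφ₀' : φ' v₀' = v₁') (hφ₁' : φ' v₁' = v₀') :
    s(v₀, v₁) = s(v₀', v₁') := by
  by_cases hv₀' : v₀' ∈ G.closerTo v₁ v₀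
  · exact hT.eq_of_inverts_of_mem_closerTo h φ hφ₀ hφ₁ h' φ' hφ₀' hφ₁' hv₀'
  · rw [Sym2.eq_swap]
    exact hT.eq_of_inverts_of_mem_closerTo h.symm φ hφ₁ hφ₀ h' φ' hφ₀' hφ₁'
      (hT.mem_closerTo_of_notMem h.symm hv₀')
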